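/- Suppose a ≥ 0, b ≥ 0, and c, d ∈ ℝ with c ≠ 0, c² ≠ d². Then ∫_0^a ∫_0^b e^{c(τ+τ') - d|τ-τ'|} dτ dτ' = (1/(c²-d²)) · (1 + (d/c)(1 - e^{2c(a∧b)}) - e^{ca - d|a|} - e^{cb - d|b|} + e^{c(a+b) - d|a-b|}). -/

import Mathlib

/-!
For `a ≤ b`, split the inner integral at `τ = τ'`: below it the integrand is
`e^{(c-d)τ'} e^{(c+d)τ}`, above it `e^{(c+d)τ'} e^{(c-d)τ}`, so the inner integral and then the
outer one are sums of exponentials with explicit antiderivatives. The case `b ≤ a` follows because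
the integrand is symmetric in `(τ, τ')` and the right-hand side is symmetric in `(a, b)`.
-/

open Real Set intervalIntegral

lemma hasDerivAt_exp_mul_div {k : ℝ} (hk : k ≠ 0) (t : ℝ) :
    HasDerivAt (fun t => exp (k * t) / k) (exp (k * t)) t := by
  refine ((((hasDerivAt_id' t).const_mul k).exp).div_const k).congr_deriv ?_
  field_simp

lemma integral_exp_mul {k : ℝ} (hk : k ≠ 0) (x y : ℝ) :
    ∫ t in x..y, exp (k * t) = (exp (k * y) - exp (k * x)) / k := by
  rw [integral_eq_sub_of_hasDerivAt (fun t _ => hasDerivAt_exp_mul_div hk t)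
    ((by fun_prop : Continuous fun t => exp (k * t)).intervalIntegrable x y)]
  ring

lemma intervalIntegral_intervalIntegral_symm {E : Type*} [NormedAddCommGroup E]
    [NormedSpace ℝ E] {F : ℝ → ℝ → E} (hF : Continuous F.uncurry)
    (hsymm : ∀ x y, F x y = F y x) (a b c d : ℝ) :
    ∫ x in a..b, ∫ y in c..d, F x y = ∫ x in c..d, ∫ y in a..b, F x y := by
  have hint : MeasureTheory.IntegrableOn F.uncurry (uIoc a b ×ˢ uIoc c d) :=
    (hF.continuousOn.integrableOn_compact (isCompact_uIcc.prod isCompact_uIcc)).mono_set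
      (prod_mono uIoc_subset_uIcc uIoc_subset_uIcc)
  exact (MeasureTheory.intervalIntegral_intervalIntegral_swap hint).trans <|
    integral_congr fun x _ => integral_congr fun y _ => hsymm y x

section

variable {c d : ℝ}

lemma integral_exp_linear_sub_abs {b s : ℝ} (hs : 0 ≤ s) (hsb : s ≤ b)
    (hpos : c + d ≠ 0) (hneg : c - d ≠ 0) :
    ∫ τ in (0 : ℝ)..b, exp (c * (τ + s) - d * |τ - s|)
      = (exp (2 * c * s) - exp ((c - d) * s)) / (c + d)
        + (exp ((c - d) * b) * exp ((c + d) * s) - exp (2 * c * s)) / (c - d) := by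
  have hcont : Continuous fun τ => exp (c * (τ + s) - d * |τ - s|) := by fun_prop
  have below : ∫ τ in (0 : ℝ)..s, exp (c * (τ + s) - d * |τ - s|)
      = ∫ τ in (0 : ℝ)..s, exp ((c - d) * s) * exp ((c + d) * τ) := by
    refine integral_congr fun τ hτ => ?_
    rw [uIcc_of_le hs] at hτ
    rw [abs_of_nonpos (by linarith [hτ.2]), ← exp_add]
    ring_nf
  have above : ∫ τ in s..b, exp (c * (τ + s) - d * |τ - s|)
      = ∫ τ in s..b, exp ((c + d) * s) * exp ((c - d) * τ) := by
    refine integral_congr fun τ hτ => ?_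
    rw [uIcc_of_le hsb] at hτ
    rw [abs_of_nonneg (by linarith [hτ.1]), ← exp_add]
    ring_nf
  have hprod : exp ((c - d) * s) * exp ((c + d) * s) = exp (2 * c * s) := by
    rw [← exp_add]; ring_nf
  rw [← integral_add_adjacent_intervals (hcont.intervalIntegrable 0 s)
    (hcont.intervalIntegrable s b), below, above, integral_const_mul, integral_const_mul,
    integral_exp_mul hpos, integral_exp_mul hneg, mul_zero, exp_zero]
  linear_combination (1 / (c + d) - 1 / (c - d)) * hprod

lemma integral_integral_exp_linear_sub_abs_of_le {a b : ℝ} (ha : 0 ≤ a) (hab : a ≤ b)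
    (hc : c ≠ 0) (hpos : c + d ≠ 0) (hneg : c - d ≠ 0) :
    (∫ τ' in (0 : ℝ)..a, ∫ τ in (0 : ℝ)..b, exp (c * (τ + τ') - d * |τ - τ'|))
      = (1 / (c ^ 2 - d ^ 2)) *
        (1 + (d / c) * (1 - exp (2 * c * min a b))
          - exp (c * a - d * |a|) - exp (c * b - d * |b|)
          + exp (c * (a + b) - d * |a - b|)) := by
  have h2c : 2 * c ≠ 0 := mul_ne_zero two_ne_zero hc
  have hprim : ∀ s, HasDerivAt
      (fun s => (exp (2 * c * s) / (2 * c) - exp ((c - d) * s) / (c - d)) / (c + d)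
        + (exp ((c - d) * b) * (exp ((c + d) * s) / (c + d)) - exp (2 * c * s) / (2 * c))
          / (c - d))
      ((exp (2 * c * s) - exp ((c - d) * s)) / (c + d)
        + (exp ((c - d) * b) * exp ((c + d) * s) - exp (2 * c * s)) / (c - d)) s := fun s =>
    (((hasDerivAt_exp_mul_div h2c s).sub (hasDerivAt_exp_mul_div hneg s)).div_const _).add
      ((((hasDerivAt_exp_mul_div hpos s).const_mul _).sub
        (hasDerivAt_exp_mul_div h2c s)).div_const _)
  rw [integral_congr fun s hs => integral_exp_linear_sub_abs (uIcc_of_le ha ▸ hs).1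
      ((uIcc_of_le ha ▸ hs).2.trans hab) hpos hneg,
    integral_eq_sub_of_hasDerivAt (fun s _ => hprim s)
      ((by fun_prop : Continuous fun s => _).intervalIntegrable 0 a),
    min_eq_left hab, abs_of_nonneg ha, abs_of_nonneg (ha.trans hab), abs_of_nonpos (by linarith),
    show c * a - d * a = (c - d) * a by ring, show c * b - d * b = (c - d) * b by ring,
    show c * (a + b) - d * -(a - b) = (c - d) * b + (c + d) * a by ring, exp_add]
  simp only [mul_zero, exp_zero]
  have hsq : c ^ 2 - d ^ 2 ≠ 0 := by
    rw [sq_sub_sq]; exact mul_ne_zero hpos hneg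
  field_simp
  ring

end

theorem stmt_12 (a b c d : ℝ) (ha : 0 ≤ a) (hb : 0 ≤ b) (hc : c ≠ 0)
    (hcd : c ^ 2 ≠ d ^ 2) :
    (∫ τ' in (0 : ℝ)..a, ∫ τ in (0 : ℝ)..b, Real.exp (c * (τ + τ') - d * |τ - τ'|))
      = (1 / (c ^ 2 - d ^ 2)) *
        (1 + (d / c) * (1 - Real.exp (2 * c * min a b))
          - Real.exp (c * a - d * |a|) - Real.exp (c * b - d * |b|)
          + Real.exp (c * (a + b) - d * |a - b|)) := by
  obtain ⟨hneg, hpos⟩ : c ≠ d ∧ c ≠ -d := by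
    rwa [Ne, sq_eq_sq_iff_eq_or_eq_neg, not_or] at hcd
  rw [← sub_ne_zero] at hneg
  rw [← sub_ne_zero, sub_neg_eq_add] at hpos
  rcases le_total a b with hab | hba
  · exact integral_integral_exp_linear_sub_abs_of_le ha hab hc hpos hneg
  · rw [intervalIntegral_intervalIntegral_symm (by fun_prop)
        (fun x y => by rw [add_comm, abs_sub_comm]),
      integral_integral_exp_linear_sub_abs_of_le hb hba hc hpos hneg,
      min_comm, add_comm b a, abs_sub_comm b a, sub_right_comm _ (exp (c * b - d * |b|))]
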